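/- Let G = (V, E) be a nontrivial m-uniform hypergraph with |V| = n, where m ≥ 3 and n ≥ m, let ω(G) be its coclique number, and let A be its adjacency tensor. Then for every real number λ such that the tensor λ(A + I) − E_tensor is copositive, one has ω(G)^{m−1} ≤ λ; in particular ω(G)^{m−1} ≤ min{λ ∈ ℕ : λ(A + I) − E_tensor is copositive} whenever this set is nonempty. -/

import Mathlib

open scoped BigOperators

/-- `A x^m`: the homogeneous form of an `m`-th order `n`-dimensional tensor. -/
def tApply {m n : ℕ} (A : (Fin m → Fin n) → ℝ) (x : Fin n → ℝ) : ℝ :=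
  ∑ i : Fin m → Fin n, A i * ∏ t, x (i t)

/-- A tensor is symmetric if its entries are invariant under permutations of indices. -/
def IsSymT {m n : ℕ} (A : (Fin m → Fin n) → ℝ) : Prop :=
  ∀ (σ : Equiv.Perm (Fin m)) (i : Fin m → Fin n), A (i ∘ σ) = A i

/-- Copositivity: `A x^m ≥ 0` for all `x` in the nonnegative orthant. -/
def Copositive {m n : ℕ} (A : (Fin m → Fin n) → ℝ) : Prop :=
  ∀ x : Fin n → ℝ, (∀ j, 0 ≤ x j) → 0 ≤ tApply A x

/-- A coclique of an `m`-uniform hypergraph with edge set `E`: a set of vertices no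
`m`-element subset of which is an edge. -/
def IsCoclique {n : ℕ} (m : ℕ) (E : Finset (Finset (Fin n))) (S : Finset (Fin n)) : Prop :=
  ∀ T : Finset (Fin n), T ⊆ S → T.card = m → T ∉ E

/-- The identity tensor: entry `1` on the diagonal, `0` elsewhere. -/
def idT (m n : ℕ) : (Fin m → Fin n) → ℝ :=
  fun i => if ∀ s t, i s = i t then 1 else 0

/-- The adjacency tensor of an `m`-uniform hypergraph with edge set `E`:
entry `1/(m-1)!` if the index set is an edge, `0` otherwise. -/
noncomputable def adjTensor (m n : ℕ) (E : Finset (Finset (Fin n))) : (Fin m → Fin n) → ℝ :=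
  fun i => if Finset.image i Finset.univ ∈ E then 1 / (Nat.factorial (m - 1) : ℝ) else 0

/-! Evaluate the copositive form at the indicator vector `x` of a maximum coclique `S`:
no edge lies inside `S`, so `A x^m = 0`, while `I x^m = |S|` and `E x^m = |S|^m`.
Copositivity then reads `λ |S| ≥ |S|^m`, and `|S| ≥ 1` since single vertices are cocliques. -/

section tApply

variable {m n : ℕ}

theorem tApply_add (A B : (Fin m → Fin n) → ℝ) (x : Fin n → ℝ) :
    tApply (A + B) x = tApply A x + tApply B x := by
  simp only [tApply, Pi.add_apply, add_mul, Finset.sum_add_distrib]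

theorem tApply_sub (A B : (Fin m → Fin n) → ℝ) (x : Fin n → ℝ) :
    tApply (A - B) x = tApply A x - tApply B x := by
  simp only [tApply, Pi.sub_apply, sub_mul, Finset.sum_sub_distrib]

theorem tApply_smul (c : ℝ) (A : (Fin m → Fin n) → ℝ) (x : Fin n → ℝ) :
    tApply (c • A) x = c * tApply A x := by
  simp only [tApply, Pi.smul_apply, smul_eq_mul, mul_assoc, Finset.mul_sum]

theorem tApply_one (x : Fin n → ℝ) : tApply (1 : (Fin m → Fin n) → ℝ) x = (∑ j, x j) ^ m := by
  rw [← Fin.prod_const, Finset.prod_univ_sum, Fintype.piFinset_univ]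
  simp only [tApply, Pi.one_apply, one_mul]

theorem tApply_idT (hm : 0 < m) (x : Fin n → ℝ) : tApply (idT m n) x = ∑ j, x j ^ m := by
  let t₀ : Fin m := ⟨0, hm⟩
  simp only [tApply, idT, ite_mul, one_mul, zero_mul, ← Finset.sum_filter]
  refine Finset.sum_nbij' (fun i => i t₀) (fun j _ => j) (by simp) (by simp) ?_ (by simp) ?_
  · intro i hi
    simp only [Finset.mem_filter, Finset.mem_univ, true_and] at hi
    exact funext fun t => hi t₀ t
  · intro i hi
    simp only [Finset.mem_filter, Finset.mem_univ, true_and] at hi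
    rw [Finset.prod_congr rfl fun t _ => by rw [hi t t₀], Finset.prod_const, Finset.card_univ,
      Fintype.card_fin]

end tApply

section Coclique

variable {m n : ℕ} {E : Finset (Finset (Fin n))} {S : Finset (Fin n)}

theorem isCoclique_singleton (hm : 2 ≤ m) (E : Finset (Finset (Fin n))) (v : Fin n) :
    IsCoclique m E {v} := by
  intro T hT hTcard
  have := Finset.card_le_card hT
  simp only [Finset.card_singleton] at this
  omega

theorem tApply_adjTensor_eq_zero (hunif : ∀ e ∈ E, e.card = m) (hS : IsCoclique m E S)
    {x : Fin n → ℝ} (hx : ∀ j ∉ S, x j = 0) : tApply (adjTensor m n E) x = 0 := by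
  refine Finset.sum_eq_zero fun i _ => ?_
  by_cases hE : Finset.image i Finset.univ ∈ E
  · by_cases hiS : ∀ t, i t ∈ S
    · exact absurd hE <| hS _ (by simpa [Finset.image_subset_iff] using hiS) (hunif _ hE)
    · obtain ⟨t, ht⟩ := not_forall.mp hiS
      rw [Finset.prod_eq_zero (Finset.mem_univ t) (hx _ ht), mul_zero]
  · simp only [adjTensor, hE, if_false, zero_mul]

theorem card_pow_le_of_copositive (hm : 0 < m) (hunif : ∀ e ∈ E, e.card = m)
    (hS : IsCoclique m E S) (hSne : S.Nonempty) {lam : ℝ}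
    (hcop : Copositive (fun i => lam * (adjTensor m n E i + idT m n i) - 1)) :
    (S.card : ℝ) ^ (m - 1) ≤ lam := by
  set x : Fin n → ℝ := fun j => if j ∈ S then 1 else 0
  have hsum : ∑ j, x j = S.card := by simp [x, Finset.sum_ite_mem]
  have hpow : ∑ j, x j ^ m = S.card := by
    rw [← hsum]
    exact Finset.sum_congr rfl fun j _ => by by_cases hj : j ∈ S <;> simp [x, hj, hm.ne']
  have h := hcop x fun j => by by_cases hj : j ∈ S <;> simp [x, hj]
  have hform : (fun i => lam * (adjTensor m n E i + idT m n i) - 1) =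
      lam • (adjTensor m n E + idT m n) - 1 := rfl
  rw [hform, tApply_sub, tApply_smul, tApply_add, tApply_one, tApply_idT hm,
    tApply_adjTensor_eq_zero hunif hS fun j hj => by simp [x, hj], hpow, hsum] at h
  have hcard : (0 : ℝ) < S.card := by exact_mod_cast hSne.card_pos
  have : (S.card : ℝ) ^ (m - 1) * S.card ≤ lam * S.card := by
    rw [← pow_succ, Nat.sub_add_cancel hm]
    linarith
  exact le_of_mul_le_mul_right this hcard

end Coclique

theorem stmt15_general (m n : ℕ) (hm : 3 ≤ m) (hn : m ≤ n)
    (E : Finset (Finset (Fin n))) (hunif : ∀ e ∈ E, e.card = m)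
    (ω : ℕ)
    (hω : IsGreatest {k | ∃ S : Finset (Fin n), IsCoclique m E S ∧ S.card = k} ω) :
    (∀ lam : ℝ,
        Copositive (fun i => lam * (adjTensor m n E i + idT m n i) - 1) →
        (ω : ℝ) ^ (m - 1) ≤ lam) ∧
      (∀ _hne : {lam : ℕ |
            Copositive (fun i => (lam : ℝ) * (adjTensor m n E i + idT m n i) - 1)}.Nonempty,
        (ω : ℝ) ^ (m - 1) ≤
          (Nat.cast (sInf {lam : ℕ |
            Copositive (fun i => (lam : ℝ) * (adjTensor m n E i + idT m n i) - 1)}) : ℝ)) := by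
  obtain ⟨⟨S, hS, rfl⟩, hmax⟩ := hω
  have hSne : S.Nonempty := Finset.card_pos.mp <|
    hmax ⟨{⟨0, by omega⟩}, isCoclique_singleton (by omega) E _, Finset.card_singleton _⟩
  have hbound : ∀ lam : ℝ, Copositive (fun i => lam * (adjTensor m n E i + idT m n i) - 1) →
      (S.card : ℝ) ^ (m - 1) ≤ lam :=
    fun _ => card_pow_le_of_copositive (by omega) hunif hS hSne
  exact ⟨hbound, fun hne => hbound _ (Nat.sInf_mem hne)⟩

theorem stmt15 (m n : ℕ) (hm : 3 ≤ m) (hn : m ≤ n)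
    (E : Finset (Finset (Fin n))) (hunif : ∀ e ∈ E, e.card = m) (hne : E.Nonempty)
    (ω : ℕ)
    (hω : IsGreatest {k | ∃ S : Finset (Fin n), IsCoclique m E S ∧ S.card = k} ω) :
    (∀ lam : ℝ,
        Copositive (fun i => lam * (adjTensor m n E i + idT m n i) - 1) →
        (ω : ℝ) ^ (m - 1) ≤ lam) ∧
      (∀ _hne : {lam : ℕ |
            Copositive (fun i => (lam : ℝ) * (adjTensor m n E i + idT m n i) - 1)}.Nonempty,
        (ω : ℝ) ^ (m - 1) ≤
          (Nat.cast (sInf {lam : ℕ |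
            Copositive (fun i => (lam : ℝ) * (adjTensor m n E i + idT m n i) - 1)}) : ℝ)) :=
  stmt15_general m n hm hn E hunif ω hω
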